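/- Let {|ψ_x⟩}_{x=1}^{d₁d₂} be a complete orthonormal basis of C^{d₁} ⊗ C^{d₂}, taken as an ensemble with equal prior probabilities 1/(d₁d₂). If there exists an LOCC protocol that perfectly distinguishes the states |ψ_x⟩ (i.e., achieves accessible information log₂(d₁d₂)), then every |ψ_x⟩ is a product state: the basis contains no entangled state. -/

import Mathlib

open Matrix
open scoped Kronecker ComplexOrder

noncomputable section

namespace LAI

/-- Shannon entropy (base 2) of a finitely supported distribution. -/
def shannon {α : Type*} [Fintype α] (p : α → ℝ) : ℝ :=
  -∑ a, p a * Real.logb 2 (p a)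

open scoped Classical in
/-- von Neumann entropy (base 2) of a matrix (via eigenvalues of a Hermitian matrix). -/
def vN {n : Type*} [Fintype n] [DecidableEq n] (ρ : Matrix n n ℂ) : ℝ :=
  if h : ρ.IsHermitian then -∑ i, h.eigenvalues i * Real.logb 2 (h.eigenvalues i) else 0

/-- Partial trace over the second subsystem. -/
def trB {α β : Type*} [Fintype β] (ρ : Matrix (α × β) (α × β) ℂ) : Matrix α α ℂ :=
  Matrix.of fun i j => ∑ k, ρ (i, k) (j, k)

/-- Partial trace over the first subsystem. -/
def trA {α β : Type*} [Fintype α] (ρ : Matrix (α × β) (α × β) ℂ) : Matrix β β ℂ :=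
  Matrix.of fun i j => ∑ k, ρ (k, i) (k, j)

/-- Classical mutual information `I(X:Y)` of a joint distribution `P`. -/
def mi {α β : Type*} [Fintype α] [Fintype β] (P : α → β → ℝ) : ℝ :=
  shannon (fun a => ∑ b, P a b) + shannon (fun b => ∑ a, P a b)
    - shannon (fun ab : α × β => P ab.1 ab.2)

/-- The Holevo quantity `χ` of the ensemble `{p x, ρ x}`. -/
def holevo {X n : Type*} [Fintype X] [Fintype n] [DecidableEq n]
    (p : X → ℝ) (ρ : X → Matrix n n ℂ) : ℝ :=
  vN (∑ x, (p x : ℂ) • ρ x) - ∑ x, p x * vN (ρ x)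

/-- The rank-one projector `|u⟩⟨u|` onto a vector `u`. -/
def proj {n : Type*} (u : n → ℂ) : Matrix n n ℂ :=
  Matrix.vecMulVec u (star u)

/-- A density matrix: positive semidefinite with unit trace. -/
def IsState {n : Type*} [Fintype n] (ρ : Matrix n n ℂ) : Prop :=
  ρ.PosSemidef ∧ ρ.trace = 1

/-- Quantum mutual information of a bipartite state, `S(ρ_A) + S(ρ_B) - S(ρ_AB)`. -/
def qmi {α β : Type*} [Fintype α] [DecidableEq α] [Fintype β] [DecidableEq β]
    (ρ : Matrix (α × β) (α × β) ℂ) : ℝ :=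
  vN (trB ρ) + vN (trA ρ) - vN ρ

/-- A (finite-depth, adaptive) LOCC measurement protocol on a bipartite system `A ⊗ B`:
a tree of alternating local measurements, where each local measurement is given by
Kraus operators and each branch may depend on all previous outcomes
(which are communicated classically). -/
inductive LOCC (A B : Type) [Fintype A] [DecidableEq A] [Fintype B] [DecidableEq B] : Type
  | finish : LOCC A B
  | alice (k : ℕ) (V : Fin k → Matrix A A ℂ)
      (hV : ∑ a, (V a)ᴴ * V a = 1)
      (next : Fin k → LOCC A B) : LOCC A B
  | bob (k : ℕ) (W : Fin k → Matrix B B ℂ)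
      (hW : ∑ b, (W b)ᴴ * W b = 1)
      (next : Fin k → LOCC A B) : LOCC A B

lemma mul_vecMulVec {n : Type*} [Fintype n] (K : Matrix n n ℂ) (u v : n → ℂ) :
    K * Matrix.vecMulVec u v = Matrix.vecMulVec (K.mulVec u) v := by
  ext i j
  simp [Matrix.mul_apply, Matrix.vecMulVec_apply, Matrix.mulVec, dotProduct,
    Finset.sum_mul, mul_assoc]

lemma mul_proj_conjTranspose {n : Type*} [Fintype n] (K : Matrix n n ℂ) (u : n → ℂ) :
    K * proj u * Kᴴ = proj (K.mulVec u) := by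
  ext i j
  simp only [proj, Matrix.mul_apply, Matrix.vecMulVec_apply, Matrix.conjTranspose_apply,
    Matrix.mulVec, dotProduct, Pi.star_apply, RCLike.star_def, map_sum,
    Finset.sum_mul, Finset.mul_sum, _root_.map_mul]
  refine Finset.sum_congr rfl fun k _ => Finset.sum_congr rfl fun l _ => ?_
  ring

lemma trace_proj {n : Type*} [Fintype n] (u : n → ℂ) :
    (proj u).trace = ∑ v, (Complex.normSq (u v) : ℂ) := by
  simp [proj, Matrix.trace, Matrix.diag, Matrix.vecMulVec_apply, Complex.mul_conj]


namespace LOCC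

variable {A B : Type} [Fintype A] [DecidableEq A] [Fintype B] [DecidableEq B]

/-- The possible (complete) outcome records of an LOCC protocol. -/
def records : LOCC A B → Finset (List ℕ)
  | .finish => {[]}
  | .alice k _ _ next =>
      Finset.univ.biUnion fun a : Fin k => (records (next a)).image (List.cons a.val)
  | .bob k _ _ next =>
      Finset.univ.biUnion fun b : Fin k => (records (next b)).image (List.cons b.val)

/-- The probability that a given LOCC protocol, applied to the state `ρ`, produces the
outcome record `r` (computed via unnormalized post-measurement states). -/
def outP : LOCC A B → Matrix (A × B) (A × B) ℂ → List ℕ → ℝ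
  | .finish, ρ, [] => ρ.trace.re
  | .finish, _, _ :: _ => 0
  | .alice k V _ next, ρ, a :: l =>
      if h : a < k then
        outP (next ⟨a, h⟩)
          ((V ⟨a, h⟩ ⊗ₖ (1 : Matrix B B ℂ)) * ρ * (V ⟨a, h⟩ ⊗ₖ (1 : Matrix B B ℂ))ᴴ) l
      else 0
  | .alice _ _ _ _, _, [] => 0
  | .bob k W _ next, ρ, b :: l =>
      if h : b < k then
        outP (next ⟨b, h⟩)
          (((1 : Matrix A A ℂ) ⊗ₖ W ⟨b, h⟩) * ρ * ((1 : Matrix A A ℂ) ⊗ₖ W ⟨b, h⟩)ᴴ) l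
      else 0
  | .bob _ _ _ _, _, [] => 0

/-- The classical mutual information between the signal label of the ensemble `{p x, ρ x}`
and the full record of outcomes of the LOCC protocol `P`. -/
def info {X : Type*} [Fintype X] (P : LOCC A B) (p : X → ℝ)
    (ρ : X → Matrix (A × B) (A × B) ℂ) : ℝ :=
  shannon p
    + (-∑ r ∈ P.records, (∑ x, p x * P.outP (ρ x) r)
          * Real.logb 2 (∑ x, p x * P.outP (ρ x) r))
    - (-∑ x, ∑ r ∈ P.records, (p x * P.outP (ρ x) r)
          * Real.logb 2 (p x * P.outP (ρ x) r))

end LOCC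

/-- Entanglement of formation: minimal average entanglement (entropy of the reduction)
over pure-state decompositions. -/
def EoF {A B : Type*} [Fintype A] [DecidableEq A] [Fintype B] [DecidableEq B]
    (ρ : Matrix (A × B) (A × B) ℂ) : ℝ :=
  sInf { e | ∃ (k : ℕ) (q : Fin k → ℝ) (ψ : Fin k → (A × B → ℂ)),
    (∀ i, 0 ≤ q i) ∧ (∑ i, q i = 1) ∧
    (∀ i, ∑ v, Complex.normSq (ψ i v) = 1) ∧
    ρ = ∑ i, (q i : ℂ) • proj (ψ i) ∧
    e = ∑ i, q i * vN (trB (proj (ψ i))) }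

open scoped Classical in
/-- Matrix logarithm (base 2) of a Hermitian matrix, via the spectral decomposition
(with the convention `log 0 = 0`). -/
def matLog2 {n : Type*} [Fintype n] [DecidableEq n] (ρ : Matrix n n ℂ) : Matrix n n ℂ :=
  if h : ρ.IsHermitian then
    (h.eigenvectorUnitary : Matrix n n ℂ)
      * Matrix.diagonal (fun i => (Real.logb 2 (h.eigenvalues i) : ℂ))
      * (star (h.eigenvectorUnitary : Matrix n n ℂ))
  else 0

/-- Quantum relative entropy (base 2), `S(ρ‖σ) = tr(ρ log₂ ρ − ρ log₂ σ)`. -/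
def relEnt {n : Type*} [Fintype n] [DecidableEq n] (ρ σ : Matrix n n ℂ) : ℝ :=
  (Matrix.trace (ρ * matLog2 ρ - ρ * matLog2 σ)).re

/-- Separability of a bipartite state across the `A : B` cut. -/
def IsSep {A B : Type*} [Fintype A] [DecidableEq A] [Fintype B] [DecidableEq B]
    (σ : Matrix (A × B) (A × B) ℂ) : Prop :=
  ∃ (k : ℕ) (w : Fin k → ℝ) (ζA : Fin k → Matrix A A ℂ) (ζB : Fin k → Matrix B B ℂ),
    (∀ i, 0 ≤ w i) ∧ (∑ i, w i = 1) ∧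
    (∀ i, IsState (ζA i)) ∧ (∀ i, IsState (ζB i)) ∧
    σ = ∑ i, (w i : ℂ) • (ζA i ⊗ₖ ζB i)

/-- Relative entropy of entanglement across the `A : B` cut. -/
def REE {A B : Type*} [Fintype A] [DecidableEq A] [Fintype B] [DecidableEq B]
    (σ : Matrix (A × B) (A × B) ℂ) : ℝ :=
  sInf { r | ∃ ζ : Matrix (A × B) (A × B) ℂ, IsState ζ ∧ IsSep ζ ∧ r = relEnt σ ζ }

/-- Reshuffle a state of `(A ⊗ B) ⊗ (C ⊗ D)` into a state of `(A ⊗ C) ⊗ (B ⊗ D)`,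
exhibiting the `AC : BD` cut. -/
def toACBD {A B C D : Type*} (ρ : Matrix ((A × B) × (C × D)) ((A × B) × (C × D)) ℂ) :
    Matrix ((A × C) × (B × D)) ((A × C) × (B × D)) ℂ :=
  ρ.submatrix (fun x => ((x.1.1, x.2.1), (x.1.2, x.2.2)))
    (fun x => ((x.1.1, x.2.1), (x.1.2, x.2.2)))

/-- Binary entropy (base 2). -/
def binEnt (p : ℝ) : ℝ := -(p * Real.logb 2 p) - (1 - p) * Real.logb 2 (1 - p)

end LAI

namespace LAI

namespace LOCC

variable {A B : Type} [Fintype A] [DecidableEq A] [Fintype B] [DecidableEq B]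

lemma kron_conjTranspose {m n : Type*} (M : Matrix m m ℂ) (N : Matrix n n ℂ) :
    (M ⊗ₖ N)ᴴ = Mᴴ ⊗ₖ Nᴴ := by
  ext ⟨i,j⟩ ⟨k,l⟩
  simp [conjTranspose_apply, mul_comm]

lemma outP_kraus (P : LOCC A B) (r : List ℕ) :
    ∃ (S : Matrix A A ℂ) (T : Matrix B B ℂ), ∀ ρ,
      P.outP ρ r = ((S ⊗ₖ T) * ρ * (S ⊗ₖ T)ᴴ).trace.re := by
  induction P generalizing r with
  | finish =>
    cases r with
    | nil => exact ⟨1, 1, fun ρ => by simp [outP, Matrix.one_kronecker_one]⟩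
    | cons a l => exact ⟨0, 1, fun ρ => by simp [outP, Matrix.zero_kronecker]⟩
  | alice k V hV next ih =>
    cases r with
    | nil => exact ⟨0, 1, fun ρ => by simp [outP, Matrix.zero_kronecker]⟩
    | cons a l =>
      by_cases h : a < k
      · obtain ⟨S, T, hST⟩ := ih ⟨a, h⟩ l
        refine ⟨S * V ⟨a, h⟩, T, fun ρ => ?_⟩
        have h1 : (S ⊗ₖ T) * (V ⟨a,h⟩ ⊗ₖ (1 : Matrix B B ℂ)) = (S * V ⟨a,h⟩) ⊗ₖ T := by
          rw [← Matrix.mul_kronecker_mul, Matrix.mul_one]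
        simp only [outP, dif_pos h, hST]
        congr 1
        rw [← Matrix.mul_assoc, ← Matrix.mul_assoc, h1, Matrix.mul_assoc,
          ← Matrix.conjTranspose_mul, h1]
      · exact ⟨0, 1, fun ρ => by simp [outP, dif_neg h, Matrix.zero_kronecker]⟩
  | bob k W hW next ih =>
    cases r with
    | nil => exact ⟨0, 1, fun ρ => by simp [outP, Matrix.zero_kronecker]⟩
    | cons b l =>
      by_cases h : b < k
      · obtain ⟨S, T, hST⟩ := ih ⟨b, h⟩ l
        refine ⟨S, T * W ⟨b, h⟩, fun ρ => ?_⟩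
        have h1 : (S ⊗ₖ T) * ((1 : Matrix A A ℂ) ⊗ₖ W ⟨b,h⟩) = S ⊗ₖ (T * W ⟨b,h⟩) := by
          rw [← Matrix.mul_kronecker_mul, Matrix.mul_one]
        simp only [outP, dif_pos h, hST]
        congr 1
        rw [← Matrix.mul_assoc, ← Matrix.mul_assoc, h1, Matrix.mul_assoc,
          ← Matrix.conjTranspose_mul, h1]
      · exact ⟨0, 1, fun ρ => by simp [outP, dif_neg h, Matrix.zero_kronecker]⟩

lemma sum_outP (P : LOCC A B) (ρ : Matrix (A × B) (A × B) ℂ) :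
    ∑ r ∈ P.records, P.outP ρ r = ρ.trace.re := by
  induction P generalizing ρ with
  | finish => simp [records, outP]
  | alice k V hV next ih =>
    rw [records, Finset.sum_biUnion]
    · have hstep : ∀ a : Fin k,
          ∑ r ∈ ((next a).records.image (List.cons a.val)), (LOCC.alice k V hV next).outP ρ r
          = ((V a ⊗ₖ (1 : Matrix B B ℂ)) * ρ * (V a ⊗ₖ (1 : Matrix B B ℂ))ᴴ).trace.re := by
        intro a
        rw [Finset.sum_image (fun l₁ _ l₂ _ h => by simpa using h)]
        rw [← ih a]
        refine Finset.sum_congr rfl fun l _ => ?_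
        simp only [outP, a.isLt, dif_pos, Fin.eta]
      calc ∑ a : Fin k, ∑ r ∈ ((next a).records.image (List.cons a.val)),
              (LOCC.alice k V hV next).outP ρ r
          = ∑ a : Fin k, ((V a ⊗ₖ (1 : Matrix B B ℂ)) * ρ * (V a ⊗ₖ (1 : Matrix B B ℂ))ᴴ).trace.re := by
            exact Finset.sum_congr rfl fun a _ => hstep a
        _ = ((∑ a : Fin k, (V a ⊗ₖ (1 : Matrix B B ℂ))ᴴ * (V a ⊗ₖ (1 : Matrix B B ℂ))) * ρ).trace.re := by
            rw [← Complex.re_sum]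
            congr 1
            rw [Finset.sum_mul, Matrix.trace_sum]
            refine Finset.sum_congr rfl fun a _ => ?_
            rw [Matrix.trace_mul_cycle, Matrix.mul_assoc]
        _ = ρ.trace.re := by
            have : ∑ a : Fin k, (V a ⊗ₖ (1 : Matrix B B ℂ))ᴴ * (V a ⊗ₖ (1 : Matrix B B ℂ))
                = (1 : Matrix (A × B) (A × B) ℂ) := by
              have : ∀ a : Fin k, (V a ⊗ₖ (1 : Matrix B B ℂ))ᴴ * (V a ⊗ₖ (1 : Matrix B B ℂ))
                  = ((V a)ᴴ * V a) ⊗ₖ (1 : Matrix B B ℂ) := by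
                intro a
                rw [kron_conjTranspose, ← Matrix.mul_kronecker_mul, Matrix.conjTranspose_one,
                  Matrix.one_mul]
              rw [Finset.sum_congr rfl fun a _ => this a]
              have hsum : ∑ a : Fin k, ((V a)ᴴ * V a) ⊗ₖ (1 : Matrix B B ℂ)
                  = (∑ a : Fin k, (V a)ᴴ * V a) ⊗ₖ (1 : Matrix B B ℂ) := by
                ext ⟨i,j⟩ ⟨m,n⟩
                simp [Finset.sum_apply, Matrix.sum_apply, Finset.sum_mul]
              rw [hsum, hV, Matrix.one_kronecker_one]
            rw [this, Matrix.one_mul]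
    · intro a _ b _ hab
      refine Finset.disjoint_left.2 fun r hra hrb => hab ?_
      simp only [Finset.mem_image] at hra hrb
      obtain ⟨l₁, _, rfl⟩ := hra
      obtain ⟨l₂, _, h2⟩ := hrb
      have : b.val = a.val := (List.cons.injEq _ _ _ _).mp h2 |>.1
      exact Fin.val_injective this.symm ▸ rfl
  | bob k W hW next ih =>
    rw [records, Finset.sum_biUnion]
    · have hstep : ∀ a : Fin k,
          ∑ r ∈ ((next a).records.image (List.cons a.val)), (LOCC.bob k W hW next).outP ρ r
          = (((1 : Matrix A A ℂ) ⊗ₖ W a) * ρ * ((1 : Matrix A A ℂ) ⊗ₖ W a)ᴴ).trace.re := by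
        intro a
        rw [Finset.sum_image (fun l₁ _ l₂ _ h => by simpa using h)]
        rw [← ih a]
        refine Finset.sum_congr rfl fun l _ => ?_
        simp only [outP, a.isLt, dif_pos, Fin.eta]
      calc ∑ a : Fin k, ∑ r ∈ ((next a).records.image (List.cons a.val)),
              (LOCC.bob k W hW next).outP ρ r
          = ∑ a : Fin k, (((1 : Matrix A A ℂ) ⊗ₖ W a) * ρ * ((1 : Matrix A A ℂ) ⊗ₖ W a)ᴴ).trace.re := by
            exact Finset.sum_congr rfl fun a _ => hstep a
        _ = ((∑ a : Fin k, ((1 : Matrix A A ℂ) ⊗ₖ W a)ᴴ * ((1 : Matrix A A ℂ) ⊗ₖ W a)) * ρ).trace.re := by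
            rw [← Complex.re_sum]
            congr 1
            rw [Finset.sum_mul, Matrix.trace_sum]
            refine Finset.sum_congr rfl fun a _ => ?_
            rw [Matrix.trace_mul_cycle, Matrix.mul_assoc]
        _ = ρ.trace.re := by
            have : ∑ a : Fin k, ((1 : Matrix A A ℂ) ⊗ₖ W a)ᴴ * ((1 : Matrix A A ℂ) ⊗ₖ W a)
                = (1 : Matrix (A × B) (A × B) ℂ) := by
              have : ∀ a : Fin k, ((1 : Matrix A A ℂ) ⊗ₖ W a)ᴴ * ((1 : Matrix A A ℂ) ⊗ₖ W a)
                  = (1 : Matrix A A ℂ) ⊗ₖ ((W a)ᴴ * W a) := by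
                intro a
                rw [kron_conjTranspose, ← Matrix.mul_kronecker_mul, Matrix.conjTranspose_one,
                  Matrix.one_mul]
              rw [Finset.sum_congr rfl fun a _ => this a]
              have hsum : ∑ a : Fin k, (1 : Matrix A A ℂ) ⊗ₖ ((W a)ᴴ * W a)
                  = (1 : Matrix A A ℂ) ⊗ₖ (∑ a : Fin k, (W a)ᴴ * W a) := by
                ext ⟨i,j⟩ ⟨m,n⟩
                simp [Finset.sum_apply, Matrix.sum_apply, Finset.mul_sum]
              rw [hsum, hW, Matrix.one_kronecker_one]
            rw [this, Matrix.one_mul]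
    · intro a _ b _ hab
      refine Finset.disjoint_left.2 fun r hra hrb => hab ?_
      simp only [Finset.mem_image] at hra hrb
      obtain ⟨l₁, _, rfl⟩ := hra
      obtain ⟨l₂, _, h2⟩ := hrb
      have : b.val = a.val := (List.cons.injEq _ _ _ _).mp h2 |>.1
      exact Fin.val_injective this.symm ▸ rfl

end LOCC


lemma sum_mul_logb_term_le {X : Type*} [Fintype X] (a : X → ℝ) (ha : ∀ x, 0 ≤ a x) (x : X) :
    a x * Real.logb 2 (a x) ≤ a x * Real.logb 2 (∑ z, a z) := by
  rcases eq_or_lt_of_le (ha x) with h | h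
  · rw [← h]; simp
  · refine mul_le_mul_of_nonneg_left ?_ (ha x)
    exact Real.logb_le_logb_of_le one_lt_two h
      (Finset.single_le_sum (fun z _ => ha z) (Finset.mem_univ x))

lemma eq_of_sum_logb {X : Type*} [Fintype X] [DecidableEq X] (a : X → ℝ) (ha : ∀ x, 0 ≤ a x)
    (heq : ∑ x, a x * Real.logb 2 (a x) = (∑ x, a x) * Real.logb 2 (∑ x, a x))
    {x y : X} (hxy : x ≠ y) : a x = 0 ∨ a y = 0 := by
  set q := ∑ z, a z with hq
  have hterm : ∀ z ∈ Finset.univ, a z * Real.logb 2 (a z) ≤ a z * Real.logb 2 q :=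
    fun z _ => sum_mul_logb_term_le a ha z
  have hsum2 : ∑ z, a z * Real.logb 2 q = q * Real.logb 2 q := by
    rw [← Finset.sum_mul]
  have hall : ∀ z ∈ Finset.univ, a z * Real.logb 2 (a z) = a z * Real.logb 2 q := by
    rw [← Finset.sum_eq_sum_iff_of_le hterm]
    rw [heq, hsum2]
  by_contra hcon
  push_neg at hcon
  obtain ⟨hx, hy⟩ := hcon
  have hxpos : 0 < a x := lt_of_le_of_ne (ha x) (Ne.symm hx)
  have hypos : 0 < a y := lt_of_le_of_ne (ha y) (Ne.symm hy)
  have hqpos : 0 < q := lt_of_lt_of_le hxpos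
    (Finset.single_le_sum (fun z _ => ha z) (Finset.mem_univ x))
  have key : ∀ z : X, 0 < a z → a z = q := by
    intro z hz
    have := hall z (Finset.mem_univ z)
    have hlog : Real.logb 2 (a z) = Real.logb 2 q := by
      exact mul_left_cancel₀ (ne_of_gt hz) this
    exact Real.logb_injOn_pos one_lt_two (Set.mem_Ioi.2 hz) (Set.mem_Ioi.2 hqpos) hlog
  have hax : a x = q := key x hxpos
  have hay : a y = q := key y hypos
  have hle : a x + a y ≤ q := by
    have : ∑ z ∈ ({x, y} : Finset X), a z ≤ q :=
      Finset.sum_le_sum_of_subset_of_nonneg (Finset.subset_univ _)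
        (fun z _ _ => ha z)
    rwa [Finset.sum_pair hxy] at this
  rw [hax, hay] at hle
  linarith

lemma sum_proj_eq_one {d₁ d₂ : ℕ} (ψ : Fin (d₁ * d₂) → (Fin d₁ × Fin d₂ → ℂ))
    (hON : ∀ x y, (∑ v, star (ψ x v) * ψ y v) = if x = y then 1 else 0) :
    ∑ y, proj (ψ y) = 1 := by
  let e : Fin d₁ × Fin d₂ ≃ Fin (d₁ * d₂) := finProdFinEquiv
  let U : Matrix (Fin d₁ × Fin d₂) (Fin d₁ × Fin d₂) ℂ := Matrix.of fun v w => ψ (e w) v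
  have hU : Uᴴ * U = 1 := by
    ext v w
    have := hON (e v) (e w)
    simp only [Matrix.mul_apply, Matrix.conjTranspose_apply, Matrix.one_apply, U,
      Matrix.of_apply]
    rw [this]
    simp [EmbeddingLike.apply_eq_iff_eq]
  have hU' : U * Uᴴ = 1 := mul_eq_one_comm.mp hU
  have : ∑ y, proj (ψ y) = U * Uᴴ := by
    ext v w
    rw [Matrix.sum_apply, Matrix.mul_apply]
    rw [← Equiv.sum_comp e (fun y => proj (ψ y) v w)]
    refine Finset.sum_congr rfl fun u _ => ?_
    simp [proj, Matrix.vecMulVec_apply, U, Matrix.conjTranspose_apply]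
  rw [this, hU']


/-- **A locally distinguishable complete orthonormal basis contains no entangled state.**
If some LOCC protocol perfectly distinguishes the members of a complete orthonormal basis
`{|ψ_x⟩}` of `ℂ^{d₁} ⊗ ℂ^{d₂}` given with uniform priors (i.e. attains the accessible
information `log₂(d₁ d₂)`), then every `|ψ_x⟩` is a product state. -/
theorem locally_distinguishable_basis_is_product
    (d₁ d₂ : ℕ) (ψ : Fin (d₁ * d₂) → (Fin d₁ × Fin d₂ → ℂ))
    (hON : ∀ x y, (∑ v, star (ψ x v) * ψ y v) = if x = y then 1 else 0)
    (P : LOCC (Fin d₁) (Fin d₂))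
    (hperfect : P.info (fun _ : Fin (d₁ * d₂) => (1 : ℝ) / (d₁ * d₂))
        (fun x => proj (ψ x)) = Real.logb 2 (d₁ * d₂)) :
    ∀ x, ∃ (u : Fin d₁ → ℂ) (v : Fin d₂ → ℂ), ψ x = fun ij => u ij.1 * v ij.2 := by
  intro x
  have hN : 0 < d₁ * d₂ := x.pos
  have hNpos : (0:ℝ) < ((d₁ * d₂ : ℕ) : ℝ) := by exact_mod_cast hN
  -- normalization of the basis vectors
  have hnorm : ∀ y, ∑ v, Complex.normSq (ψ y v) = 1 := by
    intro y
    have h := hON y y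
    rw [if_pos rfl] at h
    have h2 : ∑ v, (Complex.normSq (ψ y v) : ℂ) = 1 := by
      rw [← h]
      refine Finset.sum_congr rfl fun v _ => ?_
      rw [RCLike.star_def, Complex.normSq_eq_conj_mul_self]
    exact_mod_cast h2
  set t : Fin (d₁ * d₂) → List ℕ → ℝ := fun y r => P.outP (proj (ψ y)) r with ht
  -- each outcome probability is a squared length under a product Kraus operator
  have hval : ∀ r : List ℕ, ∃ (S : Matrix (Fin d₁) (Fin d₁) ℂ) (T : Matrix (Fin d₂) (Fin d₂) ℂ),
      ∀ y, t y r = ∑ j, Complex.normSq ((S ⊗ₖ T).mulVec (ψ y) j) := by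
    intro r
    obtain ⟨S, T, h⟩ := P.outP_kraus r
    refine ⟨S, T, fun y => ?_⟩
    simp only [ht]
    rw [h, mul_proj_conjTranspose, trace_proj, Complex.re_sum]
    simp
  have htnonneg : ∀ y r, 0 ≤ t y r := by
    intro y r
    obtain ⟨S, T, h⟩ := hval r
    rw [h y]
    exact Finset.sum_nonneg fun j _ => Complex.normSq_nonneg _
  have htsum : ∀ y, ∑ r ∈ P.records, t y r = 1 := by
    intro y
    have h := P.sum_outP (proj (ψ y))
    have htr : (proj (ψ y)).trace = 1 := by
      rw [trace_proj, ← Complex.ofReal_sum, hnorm y, Complex.ofReal_one]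
    rw [htr] at h
    simpa using h
  -- entropy analysis: perfect distinguishability forces disjoint supports
  set p : Fin (d₁ * d₂) → ℝ := fun _ => (1 : ℝ) / (d₁ * d₂) with hp
  have hppos : ∀ z, 0 < p z := by
    intro z
    rw [hp]
    have := hNpos
    push_cast at this
    positivity
  have hsh : shannon p = Real.logb 2 (d₁ * d₂) := by
    rw [shannon]
    simp only [hp]
    rw [Finset.sum_const, Finset.card_univ, Fintype.card_fin, nsmul_eq_mul]
    have hne : ((d₁ : ℝ) * d₂) ≠ 0 := by
      have := hNpos; push_cast at this; positivity
    push_cast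
    rw [one_div, Real.logb_inv]
    field_simp
    rw [mul_div_cancel_left₀ _ hne]
  have heq0 : ∑ y, ∑ r ∈ P.records, (p y * t y r) * Real.logb 2 (p y * t y r)
      = ∑ r ∈ P.records, (∑ y, p y * t y r) * Real.logb 2 (∑ y, p y * t y r) := by
    have := hperfect
    rw [LOCC.info, hsh] at this
    simp only [ht] at *
    linarith
  rw [Finset.sum_comm] at heq0
  have hle : ∀ r ∈ P.records,
      ∑ y, (p y * t y r) * Real.logb 2 (p y * t y r)
        ≤ (∑ y, p y * t y r) * Real.logb 2 (∑ y, p y * t y r) := by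
    intro r _
    calc ∑ y, (p y * t y r) * Real.logb 2 (p y * t y r)
        ≤ ∑ y, (p y * t y r) * Real.logb 2 (∑ z, p z * t z r) := by
          refine Finset.sum_le_sum fun y _ => ?_
          exact sum_mul_logb_term_le (fun z => p z * t z r)
            (fun z => mul_nonneg (le_of_lt (hppos z)) (htnonneg z r)) y
      _ = (∑ y, p y * t y r) * Real.logb 2 (∑ y, p y * t y r) := by
          rw [← Finset.sum_mul]
  have heqr := (Finset.sum_eq_sum_iff_of_le hle).mp heq0
  have hkey : ∀ r ∈ P.records, ∀ y z, y ≠ z → t y r = 0 ∨ t z r = 0 := by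
    intro r hr y z hyz
    have h := eq_of_sum_logb (fun w => p w * t w r)
      (fun w => mul_nonneg (le_of_lt (hppos w)) (htnonneg w r)) (heqr r hr) hyz
    rcases h with h | h
    · left
      rcases mul_eq_zero.mp h with h' | h'
      · exact absurd h' (ne_of_gt (hppos y))
      · exact h'
    · right
      rcases mul_eq_zero.mp h with h' | h'
      · exact absurd h' (ne_of_gt (hppos z))
      · exact h'
  -- find a record where ψ x is detected
  obtain ⟨r, hrmem, hrpos⟩ : ∃ r ∈ P.records, 0 < t x r := by
    by_contra hcon
    push_neg at hcon
    have : ∑ r ∈ P.records, t x r ≤ 0 := Finset.sum_nonpos hcon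
    rw [htsum x] at this
    linarith
  obtain ⟨S, T, hSTy⟩ := hval r
  -- the Kraus operator annihilates every other basis vector
  have hKy0 : ∀ y, y ≠ x → (S ⊗ₖ T).mulVec (ψ y) = 0 := by
    intro y hy
    have h0 : t y r = 0 := by
      rcases hkey r hrmem x y (fun h => hy h.symm) with h | h
      · exact absurd h (ne_of_gt hrpos)
      · exact h
    rw [hSTy y] at h0
    funext j
    have := (Finset.sum_eq_zero_iff_of_nonneg
      (fun j _ => Complex.normSq_nonneg _)).mp h0 j (Finset.mem_univ j)
    exact Complex.normSq_eq_zero.mp this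
  set φ : Fin d₁ × Fin d₂ → ℂ := (S ⊗ₖ T).mulVec (ψ x) with hφ
  obtain ⟨j₀, _, hj₀⟩ : ∃ j ∈ Finset.univ, (0:ℝ) < Complex.normSq (φ j) := by
    apply Finset.exists_lt_of_sum_lt (f := fun _ => (0:ℝ))
    rw [Finset.sum_const_zero, ← hSTy x]
    exact hrpos
  have hφj₀ : φ j₀ ≠ 0 := fun h => by simp [h] at hj₀
  -- the Kraus operator is rank one along ψ x
  have hK : S ⊗ₖ T = Matrix.vecMulVec φ (star (ψ x)) := by
    calc S ⊗ₖ T = (S ⊗ₖ T) * 1 := (Matrix.mul_one _).symm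
      _ = (S ⊗ₖ T) * ∑ y, proj (ψ y) := by rw [sum_proj_eq_one ψ hON]
      _ = ∑ y, (S ⊗ₖ T) * proj (ψ y) := Finset.mul_sum _ _ _
      _ = Matrix.vecMulVec φ (star (ψ x)) := by
          rw [Finset.sum_eq_single x]
          · rw [proj, mul_vecMulVec, hφ]
          · intro y _ hy
            rw [proj, mul_vecMulVec, hKy0 y hy]
            ext i j
            simp [Matrix.vecMulVec_apply]
          · intro h
            exact absurd (Finset.mem_univ x) h
  obtain ⟨i₀, l₀⟩ := j₀
  have hE : ∀ k l, S i₀ k * T l₀ l = φ (i₀, l₀) * (starRingEnd ℂ) (ψ x (k, l)) := by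
    intro k l
    have := congrFun (congrFun hK (i₀, l₀)) (k, l)
    simpa [Matrix.kroneckerMap_apply, Matrix.vecMulVec_apply, RCLike.star_def] using this
  have hcne : (starRingEnd ℂ) (φ (i₀, l₀)) ≠ 0 := fun h =>
    hφj₀ (by simpa using congrArg (starRingEnd ℂ) h)
  refine ⟨fun k => (starRingEnd ℂ) (S i₀ k) * ((starRingEnd ℂ) (φ (i₀, l₀)))⁻¹,
    fun l => (starRingEnd ℂ) (T l₀ l), ?_⟩
  funext ij
  obtain ⟨k, l⟩ := ij
  have h2 := congrArg (starRingEnd ℂ) (hE k l)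
  simp only [_root_.map_mul, Complex.conj_conj] at h2
  field_simp
  linear_combination -h2


end LAI
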